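/- arXiv:1505.00770 — 2 statements merged into one kernel-verified Lean document; each statement's English description precedes it below -/
import Mathlib

section
/- Let H be a complex Hilbert space, Δ : K(H) → K(H) a weak-2-local derivation, and (p_n) a sequence of mutually orthogonal rank-one (minimal) projections. Let B denote the commutative C*-subalgebra of K(H) generated by the p_n. Then Δ(a + b) = Δ(a) + Δ(b) for all a, b ∈ B. -/
/-- A (non-necessarily linear) weak-2-local derivation on a (non-unital) normed complex
algebra `X` (in applications, a C*-algebra). -/
def IsWeak2LocalDerivation {X : Type*} [NonUnitalNormedRing X] [NormedSpace ℂ X]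
    (Δ : X → X) : Prop :=
  ∀ a b : X, ∀ φ : X →L[ℂ] ℂ, ∃ D : X →L[ℂ] X,
    (∀ x y : X, D (x * y) = D x * y + x * D y) ∧ φ (Δ a) = φ (D a) ∧ φ (Δ b) = φ (D b)

variable (H : Type*) [NormedAddCommGroup H] [InnerProductSpace ℂ H] [CompleteSpace H]

/-- The C*-algebra `K(H)` of compact operators on `H`. -/
noncomputable def compactOps : NonUnitalSubalgebra ℂ (H →L[ℂ] H) where
  carrier := {T | IsCompactOperator T}
  zero_mem' := isCompactOperator_zero
  add_mem' := fun hf hg => hf.add hg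
  smul_mem' := fun c T hT => hT.smul c
  mul_mem' := fun {_ g} hf _ => hf.comp_clm g

noncomputable instance : NormedSpace ℂ (compactOps H) :=
  SubmoduleClass.toNormedSpace (R := ℂ) (compactOps H)

/-!
Call a vector a block vector if it lies in the range of some `p m` or in the common kernel
of all the `p k`. For block vectors `ξ, η` and any derivation `D`, the Leibniz rule applied to
`p k * p k = p k` and to `p m * p n = 0` shows that `⟪ξ, D (p k) η⟫ = c_D * ℓ (p k)` for one
functional `ℓ` independent of `D`, built from the coordinate functionals `x ↦ ⟪u, x u⟫`
(`u` a unit vector in the range of `p m`). By continuity `x ↦ ⟪ξ, D x η⟫` is then a multiple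
of `ℓ` on the whole closed span of the `p k`, and weak-2-locality at the pairs `(a, b)`,
`(a + b, a)`, `(a + b, b)` yields `⟪ξ, Δ (a + b) η⟫ = ⟪ξ, Δ a η⟫ + ⟪ξ, Δ b η⟫`.
An operator `T` with `⟪ξ, T η⟫ = 0` for all block vectors is zero: `T` maps block vectors
into the common kernel and so kills them; hence `T†` maps everything into the common kernel,
where `T` vanishes.
-/

open scoped InnerProductSpace

lemma eq_add_of_pairwise_proportional {R : Type*} [Ring R] [NoZeroDivisors R] {S A B μ ν : R}
    (h₁ : ∃ c, A = c * μ ∧ B = c * ν) (h₂ : ∃ c, S = c * (μ + ν) ∧ A = c * μ)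
    (h₃ : ∃ c, S = c * (μ + ν) ∧ B = c * ν) : S = A + B := by
  obtain ⟨c, hA, hB⟩ := h₁
  obtain ⟨c₂, hS₂, hA₂⟩ := h₂
  obtain ⟨c₃, hS₃, hB₃⟩ := h₃
  by_cases hμ : μ = 0
  · by_cases hν : ν = 0
    · simp_all
    · obtain rfl : c₃ = c := mul_right_cancel₀ hν (hB₃.symm.trans hB)
      rw [hS₃, hA, hB, hμ, mul_add]
  · obtain rfl : c₂ = c := mul_right_cancel₀ hμ (hA₂.symm.trans hA)
    rw [hS₂, hA, hB, mul_add]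

theorem IsWeak2LocalDerivation.apply_map_add_of_proportional {X : Type*} [NonUnitalNormedRing X]
    [NormedSpace ℂ X]
    {Δ : X → X} (hΔ : IsWeak2LocalDerivation Δ) (φ ℓ : X →L[ℂ] ℂ) {s : Set X}
    (hs : ∀ D : X →L[ℂ] X, (∀ x y, D (x * y) = D x * y + x * D y) →
      ∃ c : ℂ, ∀ x ∈ s, φ (D x) = c * ℓ x)
    {a b : X} (ha : a ∈ closure (Submodule.span ℂ s : Set X))
    (hb : b ∈ closure (Submodule.span ℂ s : Set X)) :
    φ (Δ (a + b)) = φ (Δ a) + φ (Δ b) := by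
  have hB : ∀ D : X →L[ℂ] X, (∀ x y, D (x * y) = D x * y + x * D y) →
      ∃ c : ℂ, ∀ x ∈ closure (Submodule.span ℂ s : Set X), φ (D x) = c * ℓ x := by
    intro D hD
    obtain ⟨c, hc⟩ := hs D hD
    exact ⟨c, ContinuousLinearMap.eqOn_closure_span (f := φ.comp D) (g := c • ℓ) hc⟩
  have hab : a + b ∈ closure (Submodule.span ℂ s : Set X) :=
    (Submodule.span ℂ s).topologicalClosure.add_mem ha hb
  obtain ⟨D₁, hD₁, h₁a, h₁b⟩ := hΔ a b φ
  obtain ⟨D₂, hD₂, h₂s, h₂a⟩ := hΔ (a + b) a φ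
  obtain ⟨D₃, hD₃, h₃s, h₃b⟩ := hΔ (a + b) b φ
  obtain ⟨c₁, hc₁⟩ := hB D₁ hD₁
  obtain ⟨c₂, hc₂⟩ := hB D₂ hD₂
  obtain ⟨c₃, hc₃⟩ := hB D₃ hD₃
  refine eq_add_of_pairwise_proportional (μ := ℓ a) (ν := ℓ b)
    ⟨c₁, ?_, ?_⟩ ⟨c₂, ?_, ?_⟩ ⟨c₃, ?_, ?_⟩
  · rw [h₁a, hc₁ a ha]
  · rw [h₁b, hc₁ b hb]
  · rw [h₂s, hc₂ _ hab, map_add]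
  · rw [h₂a, hc₂ a ha]
  · rw [h₃s, hc₃ _ hab, map_add]
  · rw [h₃b, hc₃ b hb]

lemma NonUnitalAlgebra.adjoin_toSubmodule_le_span {R A : Type*} [CommSemiring R]
    [NonUnitalSemiring A] [Module R A] [IsScalarTower R A A] [SMulCommClass R A A] {s : Set A}
    (hs : ∀ x ∈ s, ∀ y ∈ s, x * y = 0 ∨ x * y ∈ s) :
    (NonUnitalAlgebra.adjoin R s).toSubmodule ≤ Submodule.span R s := by
  let S : Subsemigroup A :=
    { carrier := insert 0 s
      mul_mem' := by
        rintro x y (rfl | hx) (rfl | hy)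
        · exact .inl (zero_mul _)
        · exact .inl (zero_mul _)
        · exact .inl (mul_zero _)
        · exact (hs x hx y hy).imp_left id }
  rw [NonUnitalAlgebra.adjoin_eq_span]
  have hS : Subsemigroup.closure s ≤ S := Subsemigroup.closure_le.2 (Set.subset_insert _ _)
  exact (Submodule.span_mono hS).trans_eq Submodule.span_insert_zero

lemma IsStarProjection.inner_apply_apply {𝕜 E : Type*} [RCLike 𝕜] [NormedAddCommGroup E]
    [InnerProductSpace 𝕜 E] [CompleteSpace E] {P : E →L[𝕜] E} (hP : IsStarProjection P)
    (v w : E) :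
    ⟪P v, P w⟫_𝕜 = ⟪P v, w⟫_𝕜 := by
  have h := hP.isSelfAdjoint.isSymmetric (P v) w
  simp only [ContinuousLinearMap.coe_coe] at h
  rw [← h, ← mul_apply_eq_comp, hP.isIdempotentElem.eq]

section BlockVectors

variable {𝕜 E ι : Type*} [RCLike 𝕜] [NormedAddCommGroup E] [InnerProductSpace 𝕜 E]

def blockVectors (P : ι → E →L[𝕜] E) : Set E :=
  {v | (∃ m, P m v = v) ∨ ∀ k, P k v = 0}

variable {P : ι → E →L[𝕜] E}

lemma apply_mem_blockVectors {k : ι} (hP : IsIdempotentElem (P k)) (v : E) :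
    P k v ∈ blockVectors P :=
  .inl ⟨k, by rw [← mul_apply_eq_comp, hP.eq]⟩

variable [CompleteSpace E]

lemma mem_blockVectors_of_forall_inner_eq_zero (hP : ∀ k, IsStarProjection (P k)) {w : E}
    (hw : ∀ k v, ⟪P k v, w⟫_𝕜 = 0) : w ∈ blockVectors P :=
  .inr fun k => by rw [← inner_self_eq_zero (𝕜 := 𝕜), (hP k).inner_apply_apply, hw]

theorem ContinuousLinearMap.eq_zero_of_inner_blockVectors_eq_zero
    (hP : ∀ k, IsStarProjection (P k)) {T : E →L[𝕜] E}
    (hT : ∀ ξ ∈ blockVectors P, ∀ η ∈ blockVectors P, ⟪ξ, T η⟫_𝕜 = 0) : T = 0 := by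
  have hTblock : ∀ η ∈ blockVectors P, T η = 0 := fun η hη => by
    have hTη : T η ∈ blockVectors P := mem_blockVectors_of_forall_inner_eq_zero hP
      fun k v => hT _ (apply_mem_blockVectors (hP k).isIdempotentElem v) η hη
    exact inner_self_eq_zero.mp (hT _ hTη η hη)
  have hadj : ∀ η, adjoint T η = 0 := fun η => by
    have hT₁ : adjoint T η ∈ blockVectors P := mem_blockVectors_of_forall_inner_eq_zero hP
      fun k v => by
        rw [adjoint_inner_right, hTblock _ (apply_mem_blockVectors (hP k).isIdempotentElem v),
          inner_zero_left]
    rw [← inner_self_eq_zero (𝕜 := 𝕜), adjoint_inner_left, hTblock _ hT₁, inner_zero_right]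
  simpa using congrArg adjoint (ext hadj : adjoint T = 0)

end BlockVectors

namespace compactOps

variable {E : Type*} [NormedAddCommGroup E] [InnerProductSpace ℂ E]

noncomputable def matrixCoeff (ξ η : E) : compactOps E →L[ℂ] ℂ :=
  (innerSL ℂ ξ).comp ((ContinuousLinearMap.apply ℂ E η).comp
    ⟨(compactOps E).toSubmodule.subtype, continuous_subtype_val⟩)

@[simp] lemma matrixCoeff_apply (ξ η : E) (x : compactOps E) :
    matrixCoeff ξ η x = ⟪ξ, (x : E →L[ℂ] E) η⟫_ℂ := rfl

section Projections

variable {ι : Type*} {p : ι → compactOps E}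

lemma apply_eq_zero_of_apply_eq_self (horth : ∀ m n, m ≠ n → p m * p n = 0) {k m : ι}
    (hkm : k ≠ m) {v : E} (hv : (p m : E →L[ℂ] E) v = v) : (p k : E →L[ℂ] E) v = 0 := by
  rw [← hv, ← mul_apply_eq_comp, ← NonUnitalSubalgebra.coe_mul, horth k m hkm]
  rfl

variable [CompleteSpace E]

lemma inner_map_mul_apply {D : compactOps E → compactOps E}
    (hD : ∀ x y, D (x * y) = D x * y + x * D y) {e : compactOps E}
    (he : IsSelfAdjoint (e : E →L[ℂ] E)) (f : compactOps E) (ξ η : E) :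
    ⟪ξ, (D (e * f) : E →L[ℂ] E) η⟫_ℂ =
      ⟪ξ, (D e : E →L[ℂ] E) ((f : E →L[ℂ] E) η)⟫_ℂ +
        ⟪(e : E →L[ℂ] E) ξ, (D f : E →L[ℂ] E) η⟫_ℂ := by
  have h := he.isSymmetric ξ ((D f : E →L[ℂ] E) η)
  simp only [ContinuousLinearMap.coe_coe] at h
  simp only [hD, NonUnitalSubalgebra.coe_add, NonUnitalSubalgebra.coe_mul,
    add_apply, mul_apply_eq_comp, inner_add_right, h]

lemma exists_apply_eq_one_and_apply_eq_zero (hp : ∀ k, IsStarProjection (p k : E →L[ℂ] E))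
    (horth : ∀ m n, m ≠ n → p m * p n = 0) {m : ι} (hm : (p m : E →L[ℂ] E) ≠ 0) :
    ∃ ℓ : compactOps E →L[ℂ] ℂ, ℓ (p m) = 1 ∧ ∀ k ≠ m, ℓ (p k) = 0 := by
  obtain ⟨v, hv⟩ : ∃ v, (p m : E →L[ℂ] E) v ≠ 0 := by
    by_contra! h
    exact hm (ContinuousLinearMap.ext h)
  set u : E := (‖(p m : E →L[ℂ] E) v‖⁻¹ : ℂ) • (p m : E →L[ℂ] E) v
  have hu : (p m : E →L[ℂ] E) u = u := by
    rw [map_smul, ← mul_apply_eq_comp, (hp m).isIdempotentElem.eq]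
  refine ⟨matrixCoeff u u, ?_, fun k hk => ?_⟩
  · have hu1 : ‖u‖ = 1 := norm_smul_inv_norm hv
    rw [matrixCoeff_apply, hu, inner_self_eq_norm_sq_to_K, hu1]
    simp
  · rw [matrixCoeff_apply, apply_eq_zero_of_apply_eq_self horth hk hu, inner_zero_right]

variable {D : compactOps E → compactOps E}

lemma inner_map_apply_eq_add (hp : ∀ k, IsStarProjection (p k : E →L[ℂ] E))
    (hD : ∀ x y, D (x * y) = D x * y + x * D y) (k : ι) (ξ η : E) :
    ⟪ξ, (D (p k) : E →L[ℂ] E) η⟫_ℂ =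
      ⟪ξ, (D (p k) : E →L[ℂ] E) ((p k : E →L[ℂ] E) η)⟫_ℂ +
        ⟪(p k : E →L[ℂ] E) ξ, (D (p k) : E →L[ℂ] E) η⟫_ℂ := by
  have hpp : p k * p k = p k := Subtype.ext (hp k).isIdempotentElem.eq
  conv_lhs => rw [← hpp]
  exact inner_map_mul_apply hD (hp k).isSelfAdjoint (p k) ξ η

lemma inner_map_apply_eq_zero_of_apply_eq_zero (hp : ∀ k, IsStarProjection (p k : E →L[ℂ] E))
    (hD : ∀ x y, D (x * y) = D x * y + x * D y) {k : ι} {ξ η : E}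
    (hξ : (p k : E →L[ℂ] E) ξ = 0) (hη : (p k : E →L[ℂ] E) η = 0) :
    ⟪ξ, (D (p k) : E →L[ℂ] E) η⟫_ℂ = 0 := by
  rw [inner_map_apply_eq_add hp hD, hξ, hη, map_zero, inner_zero_right, inner_zero_left, add_zero]

lemma inner_map_apply_eq_zero_of_apply_eq_self (hp : ∀ k, IsStarProjection (p k : E →L[ℂ] E))
    (hD : ∀ x y, D (x * y) = D x * y + x * D y) {k : ι} {ξ η : E}
    (hξ : (p k : E →L[ℂ] E) ξ = ξ) (hη : (p k : E →L[ℂ] E) η = η) :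
    ⟪ξ, (D (p k) : E →L[ℂ] E) η⟫_ℂ = 0 := by
  have h := inner_map_apply_eq_add hp hD k ξ η
  rw [hξ, hη] at h
  exact left_eq_add.mp h

lemma inner_map_apply_eq_neg (hp : ∀ k, IsStarProjection (p k : E →L[ℂ] E))
    (horth : ∀ m n, m ≠ n → p m * p n = 0) (hD : ∀ x y, D (x * y) = D x * y + x * D y)
    {m n : ι} (hmn : m ≠ n) {ξ η : E}
    (hξ : (p m : E →L[ℂ] E) ξ = ξ) (hη : (p n : E →L[ℂ] E) η = η) :
    ⟪ξ, (D (p m) : E →L[ℂ] E) η⟫_ℂ = -⟪ξ, (D (p n) : E →L[ℂ] E) η⟫_ℂ := by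
  have hD0 : D 0 = 0 := by simpa using hD 0 0
  have h := inner_map_mul_apply hD (hp m).isSelfAdjoint (p n) ξ η
  rw [horth m n hmn, hD0, hξ, hη, ZeroMemClass.coe_zero, zero_apply, inner_zero_right] at h
  exact eq_neg_of_add_eq_zero_left h.symm

lemma exists_forall_matrixCoeff_map_eq_mul (hp : ∀ k, IsStarProjection (p k : E →L[ℂ] E))
    (horth : ∀ m n, m ≠ n → p m * p n = 0) (hp0 : ∀ m, (p m : E →L[ℂ] E) ≠ 0) {ξ η : E}
    (hξ : ξ ∈ blockVectors fun k => (p k : E →L[ℂ] E))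
    (hη : η ∈ blockVectors fun k => (p k : E →L[ℂ] E)) :
    ∃ ℓ : compactOps E →L[ℂ] ℂ, ∀ D : compactOps E → compactOps E,
      (∀ x y, D (x * y) = D x * y + x * D y) →
        ∃ c : ℂ, ∀ k, matrixCoeff ξ η (D (p k)) = c * ℓ (p k) := by
  choose e he₁ he₀ using fun m => exists_apply_eq_one_and_apply_eq_zero hp horth (hp0 m)
  simp only [matrixCoeff_apply]
  rcases hξ with ⟨m, hξ⟩ | hξ <;> rcases hη with ⟨n, hη⟩ | hη
  · refine ⟨e n - e m, fun D hD => ⟨⟪ξ, (D (p n) : E →L[ℂ] E) η⟫_ℂ, fun k => ?_⟩⟩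
    rw [sub_apply]
    by_cases hkn : k = n <;> by_cases hkm : k = m
    · subst hkn hkm
      rw [inner_map_apply_eq_zero_of_apply_eq_self hp hD hξ hη, sub_self, mul_zero]
    · subst hkn
      rw [he₁, he₀ _ _ hkm, sub_zero, mul_one]
    · subst hkm
      rw [inner_map_apply_eq_neg hp horth hD hkn hξ hη, he₀ _ _ hkn, he₁, zero_sub, mul_neg_one]
    · rw [inner_map_apply_eq_zero_of_apply_eq_zero hp hD
        (apply_eq_zero_of_apply_eq_self horth hkm hξ) (apply_eq_zero_of_apply_eq_self horth hkn hη),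
        he₀ _ _ hkn, he₀ _ _ hkm, sub_zero, mul_zero]
  · refine ⟨e m, fun D hD => ⟨⟪ξ, (D (p m) : E →L[ℂ] E) η⟫_ℂ, fun k => ?_⟩⟩
    by_cases hkm : k = m
    · rw [hkm, he₁, mul_one]
    · rw [inner_map_apply_eq_zero_of_apply_eq_zero hp hD
        (apply_eq_zero_of_apply_eq_self horth hkm hξ) (hη k), he₀ _ _ hkm, mul_zero]
  · refine ⟨e n, fun D hD => ⟨⟪ξ, (D (p n) : E →L[ℂ] E) η⟫_ℂ, fun k => ?_⟩⟩
    by_cases hkn : k = n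
    · rw [hkn, he₁, mul_one]
    · rw [inner_map_apply_eq_zero_of_apply_eq_zero hp hD (hξ k)
        (apply_eq_zero_of_apply_eq_self horth hkn hη), he₀ _ _ hkn, mul_zero]
  · exact ⟨0, fun D hD => ⟨0, fun k => by
      rw [inner_map_apply_eq_zero_of_apply_eq_zero hp hD (hξ k) (hη k), zero_mul]⟩⟩

end Projections

end compactOps

/-- Let `Δ` be a weak-2-local derivation on `K(H)` and let `(p_n)` be a sequence of
mutually orthogonal rank-one (minimal) projections.  If `B` is the commutative
C*-subalgebra of `K(H)` generated by the `p_n` (the closure of the algebra they generate),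
then `Δ(a + b) = Δ(a) + Δ(b)` for all `a, b ∈ B`. -/
theorem weak2local_additive_on_atomic_commutative_subalgebra
    (Δ : compactOps H → compactOps H) (hΔ : IsWeak2LocalDerivation Δ)
    (p : ℕ → compactOps H)
    (hproj : ∀ n, IsIdempotentElem ((p n : H →L[ℂ] H)) ∧
      IsSelfAdjoint ((p n : H →L[ℂ] H)))
    (hrank : ∀ n, Module.finrank ℂ (LinearMap.range ((p n : H →L[ℂ] H) : H →ₗ[ℂ] H)) = 1)
    (horth : ∀ m n, m ≠ n → p m * p n = 0)
    (a b : compactOps H)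
    (ha : a ∈ (NonUnitalAlgebra.adjoin ℂ (Set.range p)).topologicalClosure)
    (hb : b ∈ (NonUnitalAlgebra.adjoin ℂ (Set.range p)).topologicalClosure) :
    Δ (a + b) = Δ a + Δ b := by
  have hp : ∀ n, IsStarProjection (p n : H →L[ℂ] H) := fun n =>
    (isStarProjection_iff _).2 (hproj n)
  have hp0 : ∀ n, (p n : H →L[ℂ] H) ≠ 0 := fun n h => by
    have h1 := hrank n
    rw [h, ContinuousLinearMap.toLinearMap_zero, LinearMap.range_zero, finrank_bot] at h1
    exact zero_ne_one h1
  have hB : ∀ x ∈ (NonUnitalAlgebra.adjoin ℂ (Set.range p)).topologicalClosure,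
      x ∈ closure (Submodule.span ℂ (Set.range p) : Set (compactOps H)) := by
    refine fun x hx => closure_mono (NonUnitalAlgebra.adjoin_toSubmodule_le_span ?_) hx
    rintro _ ⟨m, rfl⟩ _ ⟨n, rfl⟩
    by_cases hmn : m = n
    · have hpp : p n * p n = p n := Subtype.ext (hp n).isIdempotentElem.eq
      exact .inr ⟨m, by rw [hmn, hpp]⟩
    · exact .inl (horth m n hmn)
  suffices h : (Δ (a + b) : H →L[ℂ] H) - Δ a - Δ b = 0 by
    rw [sub_sub, sub_eq_zero] at h
    exact Subtype.ext h
  refine ContinuousLinearMap.eq_zero_of_inner_blockVectors_eq_zero hp fun ξ hξ η hη => ?_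
  obtain ⟨ℓ, hℓ⟩ := compactOps.exists_forall_matrixCoeff_map_eq_mul hp horth hp0 hξ hη
  have h := hΔ.apply_map_add_of_proportional (compactOps.matrixCoeff ξ η) ℓ (s := Set.range p)
    (fun D hD => (hℓ D hD).imp fun _ hc => Set.forall_mem_range.2 hc) (hB a ha) (hB b hb)
  simp only [compactOps.matrixCoeff_apply] at h
  rw [sub_apply, sub_apply, inner_sub_right, inner_sub_right, h, add_sub_cancel_left, sub_self]
end

section
/- Let H be a separable infinite-dimensional complex Hilbert space and Δ : B(H) → B(H) a (not necessarily linear nor continuous) weak-2-local derivation. Then the restriction of Δ to the self-adjoint part B(H)_sa is additive: Δ(a + b) = Δ(a) + Δ(b) for all self-adjoint a, b ∈ B(H). -/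
/-! For a self-adjoint `T` and a unit vector `e`, the diagonal entry `⟪e, Δ T e⟫` only depends
on the component `w` of `T e` orthogonal to `e`: if `S` is self-adjoint and `S e ∈ ℂ e`, then
`⟪e, D S e⟫ = 0` for every bounded derivation `D` (Leibniz rule applied to `S ∘ |e⟩⟨e|`). Hence
`⟪e, Δ T e⟫ = g_e w` with `g_e w = ⟪e, Δ (|w⟩⟨e| + |e⟩⟨w|) e⟫` (`symmDiag Δ e w`).

Given a unit vector `κ ⊥ η`, compare the diagonal entries at `η`, `κ`, `η ± κ` of four operators
`|s⟩⟨η| + |η⟩⟨s| + |t⟩⟨κ| + |κ⟩⟨t|` that agree pairwise on `η + κ` and on `η - κ`. The identity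
`⟪η + κ, S (η + κ)⟫ + ⟪η - κ, S (η - κ)⟫ = 2 (⟪η, S η⟫ + ⟪κ, S κ⟫)` then shows that the second
differences of `g_η` and `g_κ` on `{η, κ}ᗮ` agree at arbitrary base points, so the second
difference of `g_η` is constant; together with `g_η (2 w) = 2 g_η w` this makes `g_η` additive.
Choosing `κ ⊥ η, a η, b η` (possible as `H` is infinite-dimensional) gives
`⟪η, Δ (a + b) η⟫ = ⟪η, Δ a η⟫ + ⟪η, Δ b η⟫` for all unit `η`, and an operator on a complex
Hilbert space with vanishing quadratic form is zero. -/

open scoped ComplexInnerProductSpace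
open ComplexConjugate InnerProductSpace ContinuousLinearMap

theorem map_add_of_second_difference_eq {V M : Type*} [AddCommGroup V] [AddCommGroup M]
    [IsAddTorsionFree M] {f : V → M}
    (hdiff : ∀ ρ p q, f (ρ + p + q) - f (ρ + p) - f (ρ + q) + f ρ = f (p + q) - f p - f q + f 0)
    (hdouble : ∀ w, f (w + w) = 2 • f w) (a b : V) : f (a + b) = f a + f b := by
  have hzero : f 0 = 0 := by simpa [two_nsmul] using hdouble 0
  have hmid : ∀ p q, f (p + p + q) + f q = 2 • f (p + q) := fun p q => by
    have h := hdiff p p q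
    rw [hdouble, hzero] at h
    linear_combination (norm := module) h
  have hodd : ∀ p, f p + f (-p) = 0 := fun p => by
    simpa [hzero] using hmid p (-p)
  have h₁ := hmid b (a - b)
  have h₂ := hmid a (b - a)
  have h₃ := hodd (a - b)
  rw [show b + b + (a - b) = a + b by abel, add_sub_cancel] at h₁
  rw [show a + a + (b - a) = a + b by abel, add_sub_cancel] at h₂
  rw [neg_sub] at h₃
  refine IsAddTorsionFree.nsmul_right_injective two_ne_zero ?_
  linear_combination (norm := module) h₁ + h₂ - h₃

theorem IsWeak2LocalDerivation.map_smul {X : Type*} [NonUnitalNormedRing X] [NormedSpace ℂ X]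
    {Δ : X → X} (hΔ : IsWeak2LocalDerivation Δ) (s : ℂ) (x : X) : Δ (s • x) = s • Δ x := by
  refine (SeparatingDual.eq_iff_forall_dual_eq (R := ℂ)).mpr fun φ => ?_
  obtain ⟨D, -, hx, hsx⟩ := hΔ x (s • x) φ
  rw [hsx, D.map_smul, φ.map_smul, φ.map_smul, hx]

theorem Submodule.exists_norm_eq_one_mem_orthogonal {𝕜 E : Type*} [RCLike 𝕜]
    [NormedAddCommGroup E] [InnerProductSpace 𝕜 E] (hE : ¬FiniteDimensional 𝕜 E)
    (K : Submodule 𝕜 E) [FiniteDimensional 𝕜 K] : ∃ v ∈ Kᗮ, ‖v‖ = 1 := by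
  have hK : Kᗮ ≠ ⊥ := fun h => hE <| by
    rw [Submodule.orthogonal_eq_bot_iff] at h
    subst h
    exact Module.Finite.equiv Submodule.topEquiv
  obtain ⟨w, hwK, hw⟩ := Submodule.exists_mem_ne_zero_of_ne_bot hK
  exact ⟨(‖w‖⁻¹ : 𝕜) • w, Kᗮ.smul_mem _ hwK, norm_smul_inv_norm hw⟩

section

variable {H : Type*} [NormedAddCommGroup H] [InnerProductSpace ℂ H]

theorem ContinuousLinearMap.inner_map_self_parallelogram (T : H →L[ℂ] H) (η κ : H) :
    ⟪η + κ, T (η + κ)⟫ + ⟪η - κ, T (η - κ)⟫ = 2 * (⟪η, T η⟫ + ⟪κ, T κ⟫) := by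
  simp only [map_add, map_sub, inner_add_left, inner_add_right, inner_sub_left, inner_sub_right]
  ring

theorem ContinuousLinearMap.eq_zero_of_inner_map_self_eq_zero_of_norm_eq_one {T : H →L[ℂ] H}
    (hT : ∀ e : H, ‖e‖ = 1 → ⟪e, T e⟫ = 0) : T = 0 := by
  refine coe_injective ((inner_map_self_eq_zero (T : H →ₗ[ℂ] H)).mp fun w => ?_)
  rcases eq_or_ne w 0 with rfl | hw
  · simp
  set e : H := (‖w‖⁻¹ : ℂ) • w
  have hw' : w = (‖w‖ : ℂ) • e := by
    rw [smul_smul, mul_inv_cancel₀ (by simpa using hw), one_smul]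
  rw [coe_coe, ← inner_conj_symm, hw', map_smul, inner_smul_left, inner_smul_right,
    hT e (norm_smul_inv_norm hw)]
  simp

noncomputable def symmRankTwo (e w : H) : H →L[ℂ] H :=
  rankOne ℂ w e + rankOne ℂ e w

theorem symmRankTwo_apply (e w z : H) : symmRankTwo e w z = ⟪e, z⟫ • w + ⟪w, z⟫ • e := rfl

theorem symmRankTwo_add_right (e w w' : H) :
    symmRankTwo e (w + w') = symmRankTwo e w + symmRankTwo e w' := by
  simp only [symmRankTwo, map_add, add_apply]
  abel

theorem symmRankTwo_add_symmRankTwo_apply {η κ s t : H} (hη : ‖η‖ = 1) (hκ : ‖κ‖ = 1)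
    (hηκ : ⟪η, κ⟫ = 0) (hs : s ∈ (ℂ ∙ η)ᗮ ⊓ (ℂ ∙ κ)ᗮ) (ht : t ∈ (ℂ ∙ η)ᗮ ⊓ (ℂ ∙ κ)ᗮ) :
    (symmRankTwo η s + symmRankTwo κ t) η = s ∧ (symmRankTwo η s + symmRankTwo κ t) κ = t := by
  simp only [Submodule.mem_inf, Submodule.mem_orthogonal_singleton_iff_inner_left] at hs ht
  simp [symmRankTwo_apply, inner_self_eq_norm_sq_to_K, hη, hκ, hηκ, inner_eq_zero_symm.mp hηκ,
    hs, ht]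

variable [CompleteSpace H]

theorem isSelfAdjoint_symmRankTwo (e w : H) : IsSelfAdjoint (symmRankTwo e w) := by
  rw [IsSelfAdjoint, symmRankTwo, star_add, star_eq_adjoint, star_eq_adjoint, adjoint_rankOne,
    adjoint_rankOne, add_comm]

theorem inner_derivation_apply_self_eq_zero {D : (H →L[ℂ] H) →L[ℂ] (H →L[ℂ] H)}
    (hD : ∀ x y, D (x * y) = D x * y + x * D y) {T : H →L[ℂ] H} (hT : IsSelfAdjoint T)
    {e : H} {c : ℂ} (hTe : T e = c • e) : ⟪e, D T e⟫ = 0 := by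
  rcases eq_or_ne e 0 with rfl | he
  · simp
  have hT_left : ∀ z, ⟪e, T z⟫ = conj c * ⟪e, z⟫ := fun z => by
    have h := hT.isSymmetric e z
    rw [coe_coe] at h
    rw [← h, hTe, inner_smul_left]
  have hreal : (c - conj c) * ⟪e, e⟫ = 0 := by
    have h := hT_left e
    rw [hTe, inner_smul_right] at h
    linear_combination h
  have hTR : T * rankOne ℂ e e = c • rankOne ℂ e e := by
    rw [mul_def, comp_rankOne, hTe, map_smul, smul_apply]
  have hleib := congrArg (fun S : H →L[ℂ] H => ⟪e, S e⟫) (hD T (rankOne ℂ e e))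
  simp only [hTR, map_smul, smul_apply, add_apply, mul_apply_eq_comp, rankOne_apply,
    inner_smul_right, inner_add_right, hT_left] at hleib
  have h : ⟪e, e⟫ ^ 2 * ⟪e, D T e⟫ = 0 := by
    linear_combination (-⟪e, e⟫) * hleib + ⟪e, D (rankOne ℂ e e) e⟫ * hreal
  exact (mul_eq_zero.mp h).resolve_left (pow_ne_zero 2 (inner_self_ne_zero.mpr he))

theorem IsWeak2LocalDerivation.inner_apply_self_eq {Δ : (H →L[ℂ] H) → (H →L[ℂ] H)}
    (hΔ : IsWeak2LocalDerivation Δ) {x y : H →L[ℂ] H} (hxy : IsSelfAdjoint (x - y)) {e : H}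
    {c : ℂ} (he : x e - y e = c • e) : ⟪e, Δ x e⟫ = ⟪e, Δ y e⟫ := by
  obtain ⟨D, hD, hx, hy⟩ := hΔ x y ((innerSL ℂ e).comp (apply ℂ H e))
  simp only [comp_apply, apply_apply, innerSL_apply_apply] at hx hy
  rw [hx, hy, ← sub_eq_zero, ← inner_sub_right, ← sub_apply, ← map_sub]
  exact inner_derivation_apply_self_eq_zero hD hxy (by rwa [sub_apply])

noncomputable def symmDiag (Δ : (H →L[ℂ] H) → (H →L[ℂ] H)) (e w : H) : ℂ :=
  ⟪e, Δ (symmRankTwo e w) e⟫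

variable {Δ : (H →L[ℂ] H) → (H →L[ℂ] H)}

namespace IsWeak2LocalDerivation

theorem inner_apply_self_eq_symmDiag (hΔ : IsWeak2LocalDerivation Δ) {T : H →L[ℂ] H}
    (hT : IsSelfAdjoint T) {e w : H} (he : ‖e‖ = 1) (hw : ⟪e, w⟫ = 0) {c : ℂ}
    (hTe : T e = c • e + w) : ⟪e, Δ T e⟫ = symmDiag Δ e w := by
  refine hΔ.inner_apply_self_eq (hT.sub (isSelfAdjoint_symmRankTwo e w)) (c := c) ?_
  simp [symmRankTwo_apply, inner_self_eq_norm_sq_to_K, he, inner_eq_zero_symm.mp hw, hTe]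

theorem symmDiag_add_self (hΔ : IsWeak2LocalDerivation Δ) (e w : H) :
    symmDiag Δ e (w + w) = 2 • symmDiag Δ e w := by
  rw [symmDiag, symmDiag, symmRankTwo_add_right, ← two_smul ℂ, hΔ.map_smul, smul_apply,
    inner_smul_right, two_nsmul, two_mul]

theorem inner_apply_add_inner_apply_symmRankTwo_add (hΔ : IsWeak2LocalDerivation Δ)
    {η κ s t : H} (hη : ‖η‖ = 1) (hκ : ‖κ‖ = 1)
    (hηκ : ⟪η, κ⟫ = 0) (hs : s ∈ (ℂ ∙ η)ᗮ ⊓ (ℂ ∙ κ)ᗮ) (ht : t ∈ (ℂ ∙ η)ᗮ ⊓ (ℂ ∙ κ)ᗮ) :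
    ⟪η, Δ (symmRankTwo η s + symmRankTwo κ t) η⟫ + ⟪κ, Δ (symmRankTwo η s + symmRankTwo κ t) κ⟫
      = symmDiag Δ η s + symmDiag Δ κ t := by
  have hP := symmRankTwo_add_symmRankTwo_apply hη hκ hηκ hs ht
  have hsa := (isSelfAdjoint_symmRankTwo η s).add (isSelfAdjoint_symmRankTwo κ t)
  simp only [Submodule.mem_inf, Submodule.mem_orthogonal_singleton_iff_inner_right] at hs ht
  rw [hΔ.inner_apply_self_eq_symmDiag hsa hη hs.1 (c := 0) (by rw [hP.1, zero_smul, zero_add]),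
    hΔ.inner_apply_self_eq_symmDiag hsa hκ ht.2 (c := 0) (by rw [hP.2, zero_smul, zero_add])]

theorem alternating_sum_inner_apply_self_eq_zero (hΔ : IsWeak2LocalDerivation Δ) {η κ : H}
    {X Y Z W : H →L[ℂ] H} (hX : IsSelfAdjoint X) (hY : IsSelfAdjoint Y) (hZ : IsSelfAdjoint Z)
    (hW : IsSelfAdjoint W) (hXY : X (η + κ) = Y (η + κ)) (hZW : Z (η + κ) = W (η + κ))
    (hXZ : X (η - κ) = Z (η - κ)) (hYW : Y (η - κ) = W (η - κ)) :
    (⟪η, Δ X η⟫ + ⟪κ, Δ X κ⟫) - (⟪η, Δ Y η⟫ + ⟪κ, Δ Y κ⟫) - (⟪η, Δ Z η⟫ + ⟪κ, Δ Z κ⟫)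
      + (⟪η, Δ W η⟫ + ⟪κ, Δ W κ⟫) = 0 := by
  have transfer : ∀ {S T : H →L[ℂ] H} {v : H}, IsSelfAdjoint S → IsSelfAdjoint T → S v = T v →
      ⟪v, Δ S v⟫ = ⟪v, Δ T v⟫ := fun hS hT h =>
    hΔ.inner_apply_self_eq (hS.sub hT) (c := 0) (by rw [h, sub_self, zero_smul])
  have polar := fun T => inner_map_self_parallelogram (Δ T) η κ
  linear_combination (polar Y + polar Z - polar X - polar W + transfer hX hY hXY
    - transfer hZ hW hZW + transfer hX hZ hXZ - transfer hY hW hYW) / 2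

theorem symmDiag_second_difference_eq (hΔ : IsWeak2LocalDerivation Δ)
    {η κ : H} (hη : ‖η‖ = 1) (hκ : ‖κ‖ = 1) (hηκ : ⟪η, κ⟫ = 0) {σ ρ p q : H}
    (hσ : σ ∈ (ℂ ∙ η)ᗮ ⊓ (ℂ ∙ κ)ᗮ) (hρ : ρ ∈ (ℂ ∙ η)ᗮ ⊓ (ℂ ∙ κ)ᗮ)
    (hp : p ∈ (ℂ ∙ η)ᗮ ⊓ (ℂ ∙ κ)ᗮ) (hq : q ∈ (ℂ ∙ η)ᗮ ⊓ (ℂ ∙ κ)ᗮ) :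
    symmDiag Δ η (σ + p + q) - symmDiag Δ η (σ + p) - symmDiag Δ η (σ + q) + symmDiag Δ η σ
      = symmDiag Δ κ (ρ + p + q) - symmDiag Δ κ (ρ + p) - symmDiag Δ κ (ρ + q)
        + symmDiag Δ κ ρ := by
  set K := (ℂ ∙ η)ᗮ ⊓ (ℂ ∙ κ)ᗮ
  set P : H → H → H →L[ℂ] H := fun s t => symmRankTwo η s + symmRankTwo κ t
  have hsa : ∀ s t, IsSelfAdjoint (P s t) := fun s t =>
    (isSelfAdjoint_symmRankTwo η s).add (isSelfAdjoint_symmRankTwo κ t)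
  have hadd : ∀ {s t}, s ∈ K → t ∈ K → P s t (η + κ) = s + t := fun hs ht => by
    rw [map_add, (symmRankTwo_add_symmRankTwo_apply hη hκ hηκ hs ht).1,
      (symmRankTwo_add_symmRankTwo_apply hη hκ hηκ hs ht).2]
  have hsub : ∀ {s t}, s ∈ K → t ∈ K → P s t (η - κ) = s - t := fun hs ht => by
    rw [map_sub, (symmRankTwo_add_symmRankTwo_apply hη hκ hηκ hs ht).1,
      (symmRankTwo_add_symmRankTwo_apply hη hκ hηκ hs ht).2]
  have hdiag := fun {s t} (hs : s ∈ K) (ht : t ∈ K) =>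
    hΔ.inner_apply_add_inner_apply_symmRankTwo_add hη hκ hηκ hs ht
  have hσpq := K.add_mem (K.add_mem hσ hp) hq
  have hσp := K.add_mem hσ hp
  have hσq := K.add_mem hσ hq
  have hρpq := K.add_mem (K.add_mem hρ hp) hq
  have hρp := K.add_mem hρ hp
  have hρq := K.add_mem hρ hq
  have key := hΔ.alternating_sum_inner_apply_self_eq_zero (hsa (σ + p + q) (ρ + p))
    (hsa (σ + p) (ρ + p + q)) (hsa (σ + q) ρ) (hsa σ (ρ + q))
    (by rw [hadd hσpq hρp, hadd hσp hρpq]; abel) (by rw [hadd hσq hρ, hadd hσ hρq]; abel)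
    (by rw [hsub hσpq hρp, hsub hσq hρ]; abel) (by rw [hsub hσp hρpq, hsub hσ hρq]; abel)
  rw [hdiag hσpq hρp, hdiag hσp hρpq, hdiag hσq hρ, hdiag hσ hρq] at key
  linear_combination key

theorem symmDiag_add (hΔ : IsWeak2LocalDerivation Δ) {η κ : H} (hη : ‖η‖ = 1) (hκ : ‖κ‖ = 1)
    (hηκ : ⟪η, κ⟫ = 0) {p q : H} (hp : p ∈ (ℂ ∙ η)ᗮ ⊓ (ℂ ∙ κ)ᗮ)
    (hq : q ∈ (ℂ ∙ η)ᗮ ⊓ (ℂ ∙ κ)ᗮ) :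
    symmDiag Δ η (p + q) = symmDiag Δ η p + symmDiag Δ η q := by
  set K := (ℂ ∙ η)ᗮ ⊓ (ℂ ∙ κ)ᗮ
  refine map_add_of_second_difference_eq (f := fun w : K => symmDiag Δ η w)
    (fun ρ p q => ?_) (fun w => hΔ.symmDiag_add_self η w) ⟨p, hp⟩ ⟨q, hq⟩
  -- both sides equal the corresponding second difference of `symmDiag Δ κ` at `0`
  have h₁ := hΔ.symmDiag_second_difference_eq hη hκ hηκ ρ.2 K.zero_mem p.2 q.2
  have h₂ := hΔ.symmDiag_second_difference_eq hη hκ hηκ K.zero_mem K.zero_mem p.2 q.2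
  simp only [Submodule.coe_add, Submodule.coe_zero, zero_add] at h₁ h₂ ⊢
  rw [h₁, h₂]

theorem inner_apply_self_add (hΔ : IsWeak2LocalDerivation Δ) {a b : H →L[ℂ] H}
    (ha : IsSelfAdjoint a) (hb : IsSelfAdjoint b) {η κ : H} (hη : ‖η‖ = 1) (hκ : ‖κ‖ = 1)
    (hκ_perp : κ ∈ (Submodule.span ℂ {η, a η, b η})ᗮ) :
    ⟪η, Δ (a + b) η⟫ = ⟪η, Δ a η⟫ + ⟪η, Δ b η⟫ := by
  have hperp : ∀ x ∈ ({η, a η, b η} : Set H), ⟪x, κ⟫ = 0 := fun x hx =>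
    Submodule.inner_right_of_mem_orthogonal (Submodule.subset_span hx) hκ_perp
  have hηκ := hperp η (by simp)
  have hK : ∀ x, ⟪x, κ⟫ = 0 → x - ⟪η, x⟫ • η ∈ (ℂ ∙ η)ᗮ ⊓ (ℂ ∙ κ)ᗮ := fun x hx => by
    simp [Submodule.mem_orthogonal_singleton_iff_inner_right, inner_sub_right, inner_smul_right,
      inner_self_eq_norm_sq_to_K, hη, inner_eq_zero_symm.mp hx, inner_eq_zero_symm.mp hηκ]
  have hu := hK (a η) (hperp (a η) (by simp))
  have hv := hK (b η) (hperp (b η) (by simp))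
  have hη_perp : ∀ {w}, w ∈ (ℂ ∙ η)ᗮ ⊓ (ℂ ∙ κ)ᗮ → ⟪η, w⟫ = 0 := fun hw =>
    Submodule.mem_orthogonal_singleton_iff_inner_right.mp (Submodule.mem_inf.mp hw).1
  rw [hΔ.inner_apply_self_eq_symmDiag (ha.add hb) hη (hη_perp (Submodule.add_mem _ hu hv))
      (c := ⟪η, a η⟫ + ⟪η, b η⟫) (by rw [add_apply, add_smul]; abel),
    hΔ.inner_apply_self_eq_symmDiag ha hη (hη_perp hu) (add_sub_cancel _ _).symm,
    hΔ.inner_apply_self_eq_symmDiag hb hη (hη_perp hv) (add_sub_cancel _ _).symm,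
    hΔ.symmDiag_add hη hκ hηκ hu hv]

end IsWeak2LocalDerivation

end

theorem weak2local_derivation_additive_on_selfadjoint_BH_general
    {H : Type*} [NormedAddCommGroup H] [InnerProductSpace ℂ H] [CompleteSpace H]
    (hinf : ¬ FiniteDimensional ℂ H)
    (Δ : (H →L[ℂ] H) → (H →L[ℂ] H)) (hΔ : IsWeak2LocalDerivation Δ)
    (a b : H →L[ℂ] H) (ha : IsSelfAdjoint a) (hb : IsSelfAdjoint b) :
    Δ (a + b) = Δ a + Δ b := by
  rw [← sub_eq_zero]
  refine eq_zero_of_inner_map_self_eq_zero_of_norm_eq_one fun η hη => ?_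
  have := FiniteDimensional.span_of_finite ℂ (Set.toFinite {η, a η, b η})
  obtain ⟨κ, hκ_perp, hκ⟩ :=
    (Submodule.span ℂ {η, a η, b η}).exists_norm_eq_one_mem_orthogonal hinf
  rw [sub_apply, add_apply, inner_sub_right, inner_add_right,
    hΔ.inner_apply_self_add ha hb hη hκ hκ_perp, sub_self]

/-- Let `H` be a separable infinite-dimensional complex Hilbert space and
`Δ : B(H) → B(H)` a (non-necessarily linear nor continuous) weak-2-local derivation.
Then `Δ` is additive on the self-adjoint part of `B(H)`. -/
theorem weak2local_derivation_additive_on_selfadjoint_BH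
    {H : Type*} [NormedAddCommGroup H] [InnerProductSpace ℂ H] [CompleteSpace H]
    [TopologicalSpace.SeparableSpace H] (hinf : ¬ FiniteDimensional ℂ H)
    (Δ : (H →L[ℂ] H) → (H →L[ℂ] H)) (hΔ : IsWeak2LocalDerivation Δ)
    (a b : H →L[ℂ] H) (ha : IsSelfAdjoint a) (hb : IsSelfAdjoint b) :
    Δ (a + b) = Δ a + Δ b :=
  weak2local_derivation_additive_on_selfadjoint_BH_general hinf Δ hΔ a b ha hb
end
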